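/- Let (X, ‖·‖, C) be a real Banach space with a nice D-adapted cone, and let f, g ∈ C with ‖f‖ = ‖g‖ = r. Then ‖f - g‖ ≤ D²·r·(e^{θ(f,g)} - 1), where θ is the Hilbert projective metric on C. Consequently, any θ-Cauchy sequence of cone elements of a fixed common norm is Cauchy in norm. -/

import Mathlib

/-- The partial order induced by a cone: `x ⪯ y` iff `y - x ∈ C ∪ {0}`. -/
def ConeLE {X : Type*} [AddCommGroup X] (C : Set X) (x y : X) : Prop :=
  y - x ∈ insert (0:X) C

/-- A nice `D`-adapted cone: convex, closed under positive scalars, blunt,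
salient, with `C ∪ {0}` closed, and `D`-adapted. -/
structure IsNiceCone {X : Type*} [NormedAddCommGroup X] [NormedSpace ℝ X]
    (C : Set X) (D : ℝ) : Prop where
  convex : Convex ℝ C
  smul_mem : ∀ c : ℝ, 0 < c → ∀ x ∈ C, c • x ∈ C
  blunt : (0:X) ∉ C
  salient : ∀ x ∈ C, -x ∉ C
  closed : IsClosed (insert (0:X) C)
  one_le : 1 ≤ D
  adapted : ∀ x y : X, ConeLE C (-y) x → ConeLE C x y → ‖x‖ ≤ D * ‖y‖

/-- `α(v,w) = sup{λ ≥ 0 : λ v ⪯ w}`. -/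
noncomputable def coneAlpha {X : Type*} [NormedAddCommGroup X] [NormedSpace ℝ X]
    (C : Set X) (v w : X) : ℝ :=
  sSup {l : ℝ | 0 ≤ l ∧ ConeLE C (l • v) w}

/-- `β(v,w) = inf{μ ≥ 0 : w ⪯ μ v}`. -/
noncomputable def coneBeta {X : Type*} [NormedAddCommGroup X] [NormedSpace ℝ X]
    (C : Set X) (v w : X) : ℝ :=
  sInf {m : ℝ | 0 ≤ m ∧ ConeLE C w (m • v)}

/-- The Hilbert projective metric `θ(v,w) = log (β(v,w) / α(v,w))`. -/
noncomputable def coneTheta {X : Type*} [NormedAddCommGroup X] [NormedSpace ℝ X]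
    (C : Set X) (v w : X) : ℝ :=
  Real.log (coneBeta C v w / coneAlpha C v w)

/-- Two cone elements are comparable when `α > 0` and the defining set of `β`
is nonempty (i.e. `β < ∞`). -/
def ConeComparable {X : Type*} [NormedAddCommGroup X] [NormedSpace ℝ X]
    (C : Set X) (v w : X) : Prop :=
  0 < coneAlpha C v w ∧ {m : ℝ | 0 ≤ m ∧ ConeLE C w (m • v)}.Nonempty

/-!
If `a f ⪯ g ⪯ b f`, then with `m = (a + b) / 2` and `c = (b - a) / 2` we have
`-c f ⪯ g - m f ⪯ c f`, so adaptedness gives `‖g - m f‖ ≤ D c ‖f‖`; since `‖f‖ = ‖g‖`, also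
`‖f - m f‖ = |‖g‖ - ‖m f‖| ≤ ‖g - m f‖`, whence `‖f - g‖ ≤ D (b - a) ‖f‖`. Taking `a = α(f,g)` and
`b = β(f,g)` (both attained, as `C ∪ {0}` is closed) and using `α ≤ D` turns this into
`D² ‖f‖ (β/α - 1) = D² ‖f‖ (e^θ - 1)`. The Cauchy statement follows because the right-hand side
tends to `0` with `θ`.
-/

open Real

theorem isClosed_setOf_coneLE {α X : Type*} [TopologicalSpace α] [AddCommGroup X]
    [TopologicalSpace X] [ContinuousSub X] {C : Set X} (hC : IsClosed (insert (0 : X) C))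
    {u v : α → X} (hu : Continuous u) (hv : Continuous v) :
    IsClosed {t | ConeLE C (u t) (v t)} :=
  hC.preimage (hv.sub hu)

namespace IsNiceCone

variable {X : Type*} [NormedAddCommGroup X] [NormedSpace ℝ X] {C : Set X} {D : ℝ}

theorem ne_zero_of_mem (hC : IsNiceCone C D) {x : X} (hx : x ∈ C) : x ≠ 0 :=
  fun h => hC.blunt (h ▸ hx)

theorem add_mem_insert (hC : IsNiceCone C D) {x y : X} (hx : x ∈ insert 0 C)
    (hy : y ∈ insert 0 C) : x + y ∈ insert 0 C := by
  rcases hx with rfl | hx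
  · simpa using hy
  rcases hy with rfl | hy
  · simpa using Or.inr hx
  right
  have hmid := hC.convex hx hy (by norm_num : (0 : ℝ) ≤ 1 / 2) (by norm_num : (0 : ℝ) ≤ 1 / 2)
    (by norm_num)
  convert hC.smul_mem 2 two_pos _ hmid using 1
  module

theorem smul_mem_insert (hC : IsNiceCone C D) {l : ℝ} (hl : 0 ≤ l) {x : X}
    (hx : x ∈ insert 0 C) : l • x ∈ insert 0 C := by
  rcases hl.eq_or_lt with rfl | hl
  · simp
  rcases hx with rfl | hx
  · simp
  · exact Or.inr (hC.smul_mem l hl x hx)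

theorem coneLE_trans (hC : IsNiceCone C D) {x y z : X} (hxy : ConeLE C x y)
    (hyz : ConeLE C y z) : ConeLE C x z := by
  unfold ConeLE at *
  rw [← sub_add_sub_cancel z y x]
  exact hC.add_mem_insert hyz hxy

theorem le_of_smul_coneLE_smul (hC : IsNiceCone C D) {f : X} (hf : f ∈ C) {a b : ℝ}
    (h : ConeLE C (a • f) (b • f)) : a ≤ b := by
  by_contra! hba
  have hpos : (a - b) • f ∈ C := hC.smul_mem (a - b) (sub_pos.2 hba) f hf
  have hneg : b • f - a • f = -((a - b) • f) := by module
  rcases (hneg ▸ h : -((a - b) • f) ∈ insert 0 C) with h0 | hC'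
  · exact hC.blunt (neg_eq_zero.1 h0 ▸ hpos)
  · exact hC.salient _ hpos hC'

theorem mul_norm_le_of_smul_coneLE (hC : IsNiceCone C D) {f g : X} (hf : f ∈ C) (hg : g ∈ C)
    {l : ℝ} (hl : 0 ≤ l) (h : ConeLE C (l • f) g) : l * ‖f‖ ≤ D * ‖g‖ := by
  have hlow : ConeLE C (-g) (l • f) := by
    unfold ConeLE
    rw [sub_neg_eq_add]
    exact hC.add_mem_insert (hC.smul_mem_insert hl (Or.inr hf)) (Or.inr hg)
  simpa [norm_smul, abs_of_nonneg hl] using hC.adapted _ _ hlow h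

theorem norm_sub_le_of_smul_coneLE_of_coneLE_smul (hC : IsNiceCone C D) {f g : X}
    (hfg : ‖f‖ = ‖g‖) {a b : ℝ} (ha : 0 ≤ a) (hab : a ≤ b) (hag : ConeLE C (a • f) g)
    (hgb : ConeLE C g (b • f)) : ‖f - g‖ ≤ D * (b - a) * ‖f‖ := by
  set m := (a + b) / 2 with hm
  set c := (b - a) / 2 with hc
  have hm0 : 0 ≤ m := by rw [hm]; linarith
  have hc0 : 0 ≤ c := by rw [hc]; linarith
  have hmid : ‖g - m • f‖ ≤ D * (c * ‖f‖) := by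
    have hlow : ConeLE C (-(c • f)) (g - m • f) := by
      unfold ConeLE at hag ⊢
      rwa [show g - m • f - -(c • f) = g - a • f by module]
    have hupp : ConeLE C (g - m • f) (c • f) := by
      unfold ConeLE at hgb ⊢
      rwa [show c • f - (g - m • f) = b • f - g by module]
    simpa [norm_smul, abs_of_nonneg hc0] using hC.adapted _ _ hlow hupp
  have hscale : ‖f - m • f‖ ≤ ‖g - m • f‖ := by
    calc ‖f - m • f‖ = |‖g‖ - ‖m • f‖| := by
          rw [show f - m • f = (1 - m) • f by module, norm_smul, norm_smul, Real.norm_eq_abs,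
            Real.norm_of_nonneg hm0, ← hfg, show ‖f‖ - m * ‖f‖ = (1 - m) * ‖f‖ by ring, abs_mul,
            abs_norm]
      _ ≤ ‖g - m • f‖ := abs_norm_sub_norm_le g (m • f)
  calc ‖f - g‖ ≤ ‖f - m • f‖ + ‖g - m • f‖ := by
        simpa only [norm_sub_rev (m • f) g] using norm_sub_le_norm_sub_add_norm_sub f (m • f) g
    _ ≤ 2 * (D * (c * ‖f‖)) := by linarith
    _ = D * (b - a) * ‖f‖ := by ring

theorem coneAlpha_mem (hC : IsNiceCone C D) {f g : X} (hf : f ∈ C) (hg : g ∈ C) :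
    0 ≤ coneAlpha C f g ∧ ConeLE C (coneAlpha C f g • f) g := by
  have hclosed : IsClosed {l : ℝ | 0 ≤ l ∧ ConeLE C (l • f) g} :=
    isClosed_Ici.inter
      (isClosed_setOf_coneLE hC.closed (continuous_id.smul continuous_const) continuous_const)
  refine hclosed.csSup_mem ⟨0, le_rfl, by simp [ConeLE, hg]⟩ ⟨D * ‖g‖ / ‖f‖, ?_⟩
  rintro l ⟨hl, hlg⟩
  rw [le_div_iff₀ (norm_pos_iff.2 (hC.ne_zero_of_mem hf))]
  exact hC.mul_norm_le_of_smul_coneLE hf hg hl hlg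

theorem coneBeta_mem (hC : IsNiceCone C D) {f g : X}
    (hne : {m : ℝ | 0 ≤ m ∧ ConeLE C g (m • f)}.Nonempty) :
    0 ≤ coneBeta C f g ∧ ConeLE C g (coneBeta C f g • f) := by
  have hclosed : IsClosed {m : ℝ | 0 ≤ m ∧ ConeLE C g (m • f)} :=
    isClosed_Ici.inter
      (isClosed_setOf_coneLE hC.closed continuous_const (continuous_id.smul continuous_const))
  exact hclosed.csInf_mem hne ⟨0, fun _ hm => hm.1⟩

theorem exp_coneTheta {f g : X} (hα : 0 < coneAlpha C f g) (hβ : 0 < coneBeta C f g) :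
    exp (coneTheta C f g) = coneBeta C f g / coneAlpha C f g :=
  exp_log (div_pos hβ hα)

theorem norm_sub_le_mul_exp_coneTheta_sub_one (hC : IsNiceCone C D) {f g : X} (hf : f ∈ C)
    (hg : g ∈ C) (hfg : ‖f‖ = ‖g‖) (hcomp : ConeComparable C f g) :
    ‖f - g‖ ≤ D ^ 2 * ‖f‖ * (exp (coneTheta C f g) - 1) := by
  obtain ⟨-, hαg⟩ := hC.coneAlpha_mem hf hg
  obtain ⟨-, hgβ⟩ := hC.coneBeta_mem hcomp.2
  have hα := hcomp.1
  set a := coneAlpha C f g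
  set b := coneBeta C f g
  have hab : a ≤ b := hC.le_of_smul_coneLE_smul hf (hC.coneLE_trans hαg hgβ)
  have haD : a ≤ D := by
    have hfpos := norm_pos_iff.2 (hC.ne_zero_of_mem hf)
    have := hC.mul_norm_le_of_smul_coneLE hf hg hα.le hαg
    rw [← hfg] at this
    exact le_of_mul_le_mul_right this hfpos
  rw [exp_coneTheta hα (hα.trans_le hab), div_sub_one hα.ne', ← mul_div_assoc, le_div_iff₀ hα]
  calc ‖f - g‖ * a ≤ D * (b - a) * ‖f‖ * a := by
        gcongr
        exact hC.norm_sub_le_of_smul_coneLE_of_coneLE_smul hfg hα.le hab hαg hgβ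
    _ ≤ D * (b - a) * ‖f‖ * D := by
        have hD : 0 ≤ D := zero_le_one.trans hC.one_le
        gcongr
    _ = D ^ 2 * ‖f‖ * (b - a) := by ring

theorem cauchySeq_of_coneTheta (hC : IsNiceCone C D) {u : ℕ → X} {r : ℝ} (hu : ∀ n, u n ∈ C)
    (hur : ∀ n, ‖u n‖ = r) (hcomp : ∀ m n, ConeComparable C (u m) (u n))
    (hθ : ∀ ε : ℝ, 0 < ε → ∃ N, ∀ m ≥ N, ∀ n ≥ N, coneTheta C (u m) (u n) < ε) :
    CauchySeq u := by
  have hr : 0 < r := hur 0 ▸ norm_pos_iff.2 (hC.ne_zero_of_mem (hu 0))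
  have hK : 0 < D ^ 2 * r := by have := hC.one_le; positivity
  rw [Metric.cauchySeq_iff]
  intro ε hε
  have hε' : 0 < ε / (D ^ 2 * r) := by positivity
  obtain ⟨N, hN⟩ := hθ (log (1 + ε / (D ^ 2 * r))) (log_pos (by linarith))
  refine ⟨N, fun m hm n hn => ?_⟩
  calc dist (u m) (u n) = ‖u m - u n‖ := dist_eq_norm _ _
    _ ≤ D ^ 2 * r * (exp (coneTheta C (u m) (u n)) - 1) := hur m ▸
        hC.norm_sub_le_mul_exp_coneTheta_sub_one (hu m) (hu n) ((hur m).trans (hur n).symm)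
          (hcomp m n)
    _ < D ^ 2 * r * (exp (log (1 + ε / (D ^ 2 * r))) - 1) := by gcongr; exact hN m hm n hn
    _ = ε := by
        rw [exp_log (by positivity), add_sub_cancel_left, mul_div_cancel₀ _ hK.ne']

end IsNiceCone

theorem norm_sub_le_of_eq_norm_general {X : Type*} [NormedAddCommGroup X] [NormedSpace ℝ X]
    (C : Set X) (D : ℝ) (hC : IsNiceCone C D)
    (f g : X) (hf : f ∈ C) (hg : g ∈ C) (r : ℝ) (hfr : ‖f‖ = r) (hgr : ‖g‖ = r)
    (hcomp : ConeComparable C f g) :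
    ‖f - g‖ ≤ D ^ 2 * r * (Real.exp (coneTheta C f g) - 1) ∧
    (∀ (u : ℕ → X) (r' : ℝ), (∀ n, u n ∈ C) → (∀ n, ‖u n‖ = r') →
      (∀ m n, ConeComparable C (u m) (u n)) →
      (∀ ε : ℝ, 0 < ε → ∃ N, ∀ m ≥ N, ∀ n ≥ N, coneTheta C (u m) (u n) < ε) →
      CauchySeq u) := by
  subst hfr
  exact ⟨hC.norm_sub_le_mul_exp_coneTheta_sub_one hf hg hgr.symm hcomp,
    fun _ _ hu hur hcomp' hθ => hC.cauchySeq_of_coneTheta hu hur hcomp' hθ⟩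

/-- For comparable `f, g` in a nice `D`-adapted cone with `‖f‖ = ‖g‖ = r`,
`‖f - g‖ ≤ D² r (e^{θ(f,g)} - 1)`; consequently, any `θ`-Cauchy sequence of
comparable cone elements of a fixed common norm is Cauchy in norm. -/
theorem norm_sub_le_of_eq_norm {X : Type*} [NormedAddCommGroup X] [NormedSpace ℝ X]
    [CompleteSpace X] (C : Set X) (D : ℝ) (hC : IsNiceCone C D)
    (f g : X) (hf : f ∈ C) (hg : g ∈ C) (r : ℝ) (hfr : ‖f‖ = r) (hgr : ‖g‖ = r)
    (hcomp : ConeComparable C f g) :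
    ‖f - g‖ ≤ D ^ 2 * r * (Real.exp (coneTheta C f g) - 1) ∧
    (∀ (u : ℕ → X) (r' : ℝ), (∀ n, u n ∈ C) → (∀ n, ‖u n‖ = r') →
      (∀ m n, ConeComparable C (u m) (u n)) →
      (∀ ε : ℝ, 0 < ε → ∃ N, ∀ m ≥ N, ∀ n ≥ N, coneTheta C (u m) (u n) < ε) →
      CauchySeq u) :=
  norm_sub_le_of_eq_norm_general C D hC f g hf hg r hfr hgr hcomp
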